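/- arXiv:2508.04991 — 3 statements merged into one kernel-verified Lean document; each statement's English description precedes it below -/
import Mathlib

section
/- Let K ⊆ ℝⁿ be a nonempty closed set, f = (f_1,…,f_q) : ℝⁿ → ℝ^q a vector polynomial with deg f_i = d_i ≥ 1, and x̄ ∈ ℝⁿ. Then K_∞ ∩ ({x ∈ ℝⁿ : f_i(x) ≤ f_i(x̄) for all i})_∞ ⊆ {x ∈ K_∞ : (f_i)^∞(x) ≤ 0 for all i}. -/
/-!
Write a point of the sublevel set as `x = t • y` with `t → ∞` and `y → v`. Splitting `f` into
homogeneous components of degrees `j ≤ d = deg f`, the quotient `f (t • y) / t ^ d` is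
`∑ⱼ fⱼ(y) t ^ (j - d)`, which tends to the leading part `f_d(v)`; on the other hand it is at
most `f(x̄) / t ^ d → 0`.
-/

open Filter Topology MvPolynomial Bornology

noncomputable section

/-- The asymptotic (recession) cone of a set `A ⊆ ℝⁿ`. -/
def asymCone {n : ℕ} (A : Set (Fin n → ℝ)) : Set (Fin n → ℝ) :=
  {v | ∃ (t : ℕ → ℝ) (x : ℕ → (Fin n → ℝ)),
    Filter.Tendsto t Filter.atTop Filter.atTop ∧ (∀ k, x k ∈ A) ∧
    Filter.Tendsto (fun k => (t k)⁻¹ • x k) Filter.atTop (nhds v)}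

/-- Pareto efficient solutions of the vector map `g` on `C`. -/
def SOLs {n q : ℕ} (C : Set (Fin n → ℝ)) (g : Fin q → (Fin n → ℝ) → ℝ) :
    Set (Fin n → ℝ) :=
  {x | x ∈ C ∧ ¬ ∃ y ∈ C, (∀ i, g i y ≤ g i x) ∧ (∃ i, g i y ≠ g i x)}

/-- Weak Pareto efficient solutions of the vector map `g` on `C`. -/
def SOLw {n q : ℕ} (C : Set (Fin n → ℝ)) (g : Fin q → (Fin n → ℝ) → ℝ) :
    Set (Fin n → ℝ) :=
  {x | x ∈ C ∧ ¬ ∃ y ∈ C, ∀ i, g i y < g i x}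

/-- Global minimizers of a scalar function `p` on `C`. -/
def SOLmin {n : ℕ} (C : Set (Fin n → ℝ)) (p : (Fin n → ℝ) → ℝ) :
    Set (Fin n → ℝ) :=
  {x | x ∈ C ∧ ∀ y ∈ C, p x ≤ p y}

/-- The recession polynomial (leading term: top-degree homogeneous part) of a
polynomial, as a function on `ℝⁿ`. -/
noncomputable def recPoly {n : ℕ} (p : MvPolynomial (Fin n) ℝ) : (Fin n → ℝ) → ℝ :=
  fun x => MvPolynomial.eval x (MvPolynomial.homogeneousComponent p.totalDegree p)

theorem MvPolynomial.IsHomogeneous.eval_smul {σ R : Type*} [CommSemiring R]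
    {p : MvPolynomial σ R} {j : ℕ} (hp : p.IsHomogeneous j) (c : R) (x : σ → R) :
    eval (c • x) p = c ^ j * eval x p := by
  rw [eval_eq, eval_eq, Finset.mul_sum]
  refine Finset.sum_congr rfl fun d hd => ?_
  have hdeg : ∑ i ∈ d.support, d i = j := by
    simpa [Finsupp.weight_apply, Finsupp.sum] using hp (mem_support_iff.mp hd)
  simp only [Pi.smul_apply, smul_eq_mul, mul_pow, Finset.prod_mul_distrib,
    Finset.prod_pow_eq_pow_sum, hdeg]
  ring

theorem MvPolynomial.eval_smul_div_pow_eq_sum {σ : Type*} (p : MvPolynomial σ ℝ) {t : ℝ}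
    (ht : t ≠ 0) (y : σ → ℝ) :
    eval (t • y) p / t ^ p.totalDegree =
      ∑ j ∈ Finset.range (p.totalDegree + 1),
        eval y (homogeneousComponent j p) * t ^ ((j : ℤ) - p.totalDegree) := by
  set d := p.totalDegree
  conv_lhs => rw [← sum_homogeneousComponent p]
  rw [map_sum, Finset.sum_div]
  refine Finset.sum_congr rfl fun j _ => ?_
  rw [(homogeneousComponent_isHomogeneous j p).eval_smul, zpow_sub₀ ht, zpow_natCast,
    zpow_natCast]
  ring

theorem MvPolynomial.tendsto_eval_smul_div_pow_totalDegree {σ ι : Type*}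
    {l : Filter ι} (p : MvPolynomial σ ℝ) {t : ι → ℝ} {y : ι → σ → ℝ} {v : σ → ℝ}
    (ht : Tendsto t l atTop) (hy : Tendsto y l (𝓝 v)) :
    Tendsto (fun k => eval (t k • y k) p / t k ^ p.totalDegree) l
      (𝓝 (eval v (homogeneousComponent p.totalDegree p))) := by
  set d := p.totalDegree
  have hterm : ∀ j ∈ Finset.range (d + 1),
      Tendsto (fun k => eval (y k) (homogeneousComponent j p) * t k ^ ((j : ℤ) - d)) l
        (𝓝 (if j = d then eval v (homogeneousComponent d p) else 0)) := by
    intro j hj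
    have hcont : Tendsto (fun k => eval (y k) (homogeneousComponent j p)) l
        (𝓝 (eval v (homogeneousComponent j p))) :=
      ((continuous_eval _).tendsto v).comp hy
    rcases (Nat.lt_succ_iff.mp (Finset.mem_range.mp hj)).eq_or_lt with rfl | hjd
    · simpa using hcont
    · have hpow : Tendsto (fun k => t k ^ ((j : ℤ) - d)) l (𝓝 0) :=
        (tendsto_zpow_atTop_zero (by omega)).comp ht
      simpa [hjd.ne] using hcont.mul hpow
  have hsum := tendsto_finsetSum _ hterm
  rw [Finset.sum_ite_eq' _ d, if_pos (Finset.self_mem_range_succ d)] at hsum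
  refine hsum.congr' ?_
  filter_upwards [ht.eventually_gt_atTop 0] with k hk
  exact (eval_smul_div_pow_eq_sum p hk.ne' (y k)).symm

theorem asymCone_mono {n : ℕ} {A B : Set (Fin n → ℝ)} (h : A ⊆ B) : asymCone A ⊆ asymCone B :=
  fun _ ⟨t, x, ht, hx, hv⟩ => ⟨t, x, ht, fun k => h (hx k), hv⟩

theorem recPoly_nonpos_of_mem_asymCone_setOf_eval_le {n : ℕ} {p : MvPolynomial (Fin n) ℝ}
    (hp : 1 ≤ p.totalDegree) {c : ℝ} {v : Fin n → ℝ}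
    (hv : v ∈ asymCone {x | eval x p ≤ c}) : recPoly p v ≤ 0 := by
  obtain ⟨t, x, ht, hx, hy⟩ := hv
  have hquot := tendsto_eval_smul_div_pow_totalDegree p ht hy
  have hbound : Tendsto (fun k => c / t k ^ p.totalDegree) atTop (𝓝 0) :=
    tendsto_const_nhds.div_atTop ((tendsto_pow_atTop (by omega)).comp ht)
  refine le_of_tendsto_of_tendsto hquot hbound ?_
  filter_upwards [ht.eventually_gt_atTop 0] with k hk
  rw [smul_inv_smul₀ hk.ne']
  exact div_le_div_of_nonneg_right (hx k) (pow_pos hk _).le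

theorem stmt0_general {n q : ℕ} (K : Set (Fin n → ℝ))
    (f : Fin q → MvPolynomial (Fin n) ℝ) (hdeg : ∀ i, 1 ≤ (f i).totalDegree)
    (xbar : Fin n → ℝ) :
    asymCone K ∩ asymCone {x | ∀ i, eval x (f i) ≤ eval xbar (f i)} ⊆
      {x | x ∈ asymCone K ∧ ∀ i, recPoly (f i) x ≤ 0} := by
  rintro v ⟨hvK, hv⟩
  refine ⟨hvK, fun i => ?_⟩
  have hsub : {x | ∀ j, eval x (f j) ≤ eval xbar (f j)} ⊆ {x | eval x (f i) ≤ eval xbar (f i)} :=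
    fun x hx => hx i
  exact recPoly_nonpos_of_mem_asymCone_setOf_eval_le (hdeg i) (asymCone_mono hsub hv)

theorem stmt0 {n q : ℕ} (K : Set (Fin n → ℝ)) (hKne : K.Nonempty) (hKcl : IsClosed K)
    (f : Fin q → MvPolynomial (Fin n) ℝ) (hdeg : ∀ i, 1 ≤ (f i).totalDegree)
    (xbar : Fin n → ℝ) :
    asymCone K ∩ asymCone {x | ∀ i, eval x (f i) ≤ eval xbar (f i)} ⊆
      {x | x ∈ asymCone K ∧ ∀ i, recPoly (f i) x ≤ 0} :=
  stmt0_general K f hdeg xbar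
end
end

section
/- Let f = (f_1,…,f_q) be a vector polynomial, S ⊆ ℝⁿ a nonempty set, and I a nonempty subset of {1,…,q} such that f_i is bounded from below on S for every i ∈ I. Then there exists λ ∈ ℝ^q with λ_i ≥ 0 for all i and λ ≠ 0 such that 0 ∈ SOL(S_∞, (Σ_{i=1}^q λ_i f_i)^∞). -/
open Filter Topology MvPolynomial Bornology

noncomputable section

/-!
If `p` has degree `d` and `x_k / t_k → v` with `x_k ∈ S`, `t_k → ∞`, then `p(x_k) / t_k^d`
tends to the leading form `p_d(v)`; a lower bound `m ≤ p(x_k)` gives `m / t_k^d ≤ p(x_k) / t_k^d`,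
hence `p_d(v) ≥ 0 = p_d(0)` when `d ≥ 1` (for `d = 0` the leading form is constant). So every
component `f_i` with `i ∈ I` alone, i.e. `λ = eᵢ`, already has `0` as a minimizer on `S_∞`.
-/

namespace MvPolynomial

theorem IsHomogeneous.eval_smul_s4 {σ R : Type*} [Fintype σ] [CommSemiring R]
    {p : MvPolynomial σ R} {j : ℕ} (h : p.IsHomogeneous j) (t : R) (y : σ → R) :
    eval (t • y) p = t ^ j * eval y p := by
  rw [eval_eq', eval_eq', Finset.mul_sum]
  refine Finset.sum_congr rfl fun d hd => ?_
  have hdj : ∑ i, d i = j := by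
    rw [← h (mem_support_iff.mp hd), Finsupp.weight_apply, Finsupp.sum_fintype _ _ (by simp)]
    simp
  simp only [Pi.smul_apply, smul_eq_mul, mul_pow, Finset.prod_mul_distrib,
    Finset.prod_pow_eq_pow_sum, hdj]
  ring

end MvPolynomial

section LeadingForm

variable {n : ℕ} {p : MvPolynomial (Fin n) ℝ}

/-- `s⁻¹ ↦ s⁻ᵈ p(s • w)` extends continuously to `s⁻¹ = 0`, where it is the leading form. -/
theorem eval_smul_eq_pow_mul_sum {s : ℝ} (hs : s ≠ 0) (w : Fin n → ℝ) :
    eval (s • w) p = s ^ p.totalDegree *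
      ∑ j ∈ Finset.range (p.totalDegree + 1),
        s⁻¹ ^ (p.totalDegree - j) * eval w (homogeneousComponent j p) := by
  conv_lhs => rw [← p.sum_homogeneousComponent]
  rw [map_sum, Finset.mul_sum]
  refine Finset.sum_congr rfl fun j hj => ?_
  have hjd : j ≤ p.totalDegree := Nat.lt_succ_iff.mp (Finset.mem_range.mp hj)
  rw [(homogeneousComponent_isHomogeneous j p).eval_smul_s4, ← mul_assoc, inv_pow,
    ← pow_sub₀ _ hs (Nat.sub_le _ _), Nat.sub_sub_self hjd]

theorem tendsto_eval_div_pow_totalDegree {t : ℕ → ℝ} {x : ℕ → Fin n → ℝ} {v : Fin n → ℝ}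
    (ht : Tendsto t atTop atTop) (hx : Tendsto (fun k => (t k)⁻¹ • x k) atTop (𝓝 v)) :
    Tendsto (fun k => eval (x k) p / t k ^ p.totalDegree) atTop (𝓝 (recPoly p v)) := by
  set d := p.totalDegree
  let G : ℝ × (Fin n → ℝ) → ℝ := fun z =>
    ∑ j ∈ Finset.range (d + 1), z.1 ^ (d - j) * eval z.2 (homogeneousComponent j p)
  have hG : Continuous G := continuous_finsetSum _ fun j _ =>
    (continuous_fst.pow _).mul ((continuous_eval _).comp continuous_snd)
  have hG0 : G (0, v) = recPoly p v := by
    simp only [G]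
    rw [Finset.sum_eq_single_of_mem d (Finset.self_mem_range_succ d)]
    · simp [recPoly, d]
    · intro j hj hjd
      have : d - j ≠ 0 := by have := Finset.mem_range.mp hj; omega
      simp [zero_pow this]
  have hlim : Tendsto (fun k => G ((t k)⁻¹, (t k)⁻¹ • x k)) atTop (𝓝 (recPoly p v)) :=
    hG0 ▸ hG.continuousAt.tendsto.comp (ht.inv_tendsto_atTop.prodMk_nhds hx)
  refine hlim.congr' ?_
  filter_upwards [ht.eventually_gt_atTop 0] with k hk
  have hx : x k = t k • (t k)⁻¹ • x k := by rw [smul_smul, mul_inv_cancel₀ hk.ne', one_smul]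
  rw [eq_div_iff (pow_pos hk d).ne', mul_comm, hx, eval_smul_eq_pow_mul_sum hk.ne', ← hx]

theorem recPoly_nonneg_of_mem_asymCone (hd : p.totalDegree ≠ 0) {S : Set (Fin n → ℝ)} {m : ℝ}
    (hm : ∀ x ∈ S, m ≤ eval x p) {v : Fin n → ℝ} (hv : v ∈ asymCone S) :
    0 ≤ recPoly p v := by
  obtain ⟨t, x, ht, hxS, hx⟩ := hv
  have hbound : Tendsto (fun k => m / t k ^ p.totalDegree) atTop (𝓝 0) :=
    ((tendsto_pow_atTop hd).comp ht).const_div_atTop m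
  refine le_of_tendsto_of_tendsto hbound (tendsto_eval_div_pow_totalDegree ht hx) ?_
  filter_upwards [ht.eventually_gt_atTop 0] with k hk
  exact div_le_div_of_nonneg_right (hm _ (hxS k)) (pow_pos hk _).le

theorem recPoly_zero (hd : p.totalDegree ≠ 0) : recPoly p 0 = 0 := by
  simp [recPoly, constantCoeff_eq, coeff_homogeneousComponent, Ne.symm hd]

theorem recPoly_eq_coeff_zero (hd : p.totalDegree = 0) (x : Fin n → ℝ) :
    recPoly p x = coeff 0 p := by
  simp [recPoly, hd, homogeneousComponent_zero]

end LeadingForm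

theorem zero_mem_asymCone {n : ℕ} {S : Set (Fin n → ℝ)} (hS : S.Nonempty) :
    (0 : Fin n → ℝ) ∈ asymCone S := by
  obtain ⟨x₀, hx₀⟩ := hS
  have ht : Tendsto (fun k : ℕ => (k : ℝ) + 1) atTop atTop :=
    tendsto_atTop_add_const_right _ 1 tendsto_natCast_atTop_atTop
  refine ⟨_, fun _ => x₀, ht, fun _ => hx₀, ?_⟩
  simpa using ht.inv_tendsto_atTop.smul_const x₀

theorem zero_mem_SOLmin_recPoly {n : ℕ} {p : MvPolynomial (Fin n) ℝ} {S : Set (Fin n → ℝ)}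
    (hS : S.Nonempty) {m : ℝ} (hm : ∀ x ∈ S, m ≤ eval x p) :
    0 ∈ SOLmin (asymCone S) (recPoly p) := by
  refine ⟨zero_mem_asymCone hS, fun v hv => ?_⟩
  by_cases hd : p.totalDegree = 0
  · rw [recPoly_eq_coeff_zero hd, recPoly_eq_coeff_zero hd]
  · rw [recPoly_zero hd]
    exact recPoly_nonneg_of_mem_asymCone hd hm hv

theorem stmt4_general {n q : ℕ} (f : Fin q → MvPolynomial (Fin n) ℝ)
    (S : Set (Fin n → ℝ)) (hSne : S.Nonempty)
    (I : Finset (Fin q)) (hI : I.Nonempty)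
    (hbd : ∀ i ∈ I, ∃ m : ℝ, ∀ x ∈ S, m ≤ eval x (f i)) :
    ∃ lam : Fin q → ℝ, (∀ i, 0 ≤ lam i) ∧ lam ≠ 0 ∧
      (0 : Fin n → ℝ) ∈
        SOLmin (asymCone S) (recPoly (∑ i, MvPolynomial.C (lam i) * f i)) := by
  obtain ⟨i₀, hi₀⟩ := hI
  obtain ⟨m, hm⟩ := hbd i₀ hi₀
  have hsum : ∑ i, C ((Pi.single i₀ 1 : Fin q → ℝ) i) * f i = f i₀ := by
    simp [Pi.single_apply]
  refine ⟨Pi.single i₀ 1, (Pi.single_nonneg.mpr zero_le_one : (0 : Fin q → ℝ) ≤ _), by simp, ?_⟩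
  rw [hsum]
  exact zero_mem_SOLmin_recPoly hSne hm

theorem stmt4 {n q : ℕ} (f : Fin q → MvPolynomial (Fin n) ℝ)
    (hdeg : ∀ i, 1 ≤ (f i).totalDegree)
    (S : Set (Fin n → ℝ)) (hSne : S.Nonempty)
    (I : Finset (Fin q)) (hI : I.Nonempty)
    (hbd : ∀ i ∈ I, ∃ m : ℝ, ∀ x ∈ S, m ≤ eval x (f i)) :
    ∃ lam : Fin q → ℝ, (∀ i, 0 ≤ lam i) ∧ lam ≠ 0 ∧
      (0 : Fin n → ℝ) ∈
        SOLmin (asymCone S) (recPoly (∑ i, MvPolynomial.C (lam i) * f i)) :=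
  stmt4_general f S hSne I hI hbd
end
end

section
/- Let K ⊆ ℝⁿ be a nonempty closed set and f = (f_1,…,f_q) a vector polynomial. Then SOL^s(K, f) ≠ ∅ in each of the following cases: (i) there exist x̄ ∈ K, a nonempty I ⊆ {1,…,q}, and λ ∈ ℝ^q with λ_i > 0 for i ∈ I and λ_i = 0 for i ∉ I, such that every f_i with i ∈ I is bounded from below on K_x̄ and SOL((K_x̄)_∞, (Σ_{i=1}^q λ_i f_i)^∞) is bounded; (ii) there exist x̄ ∈ K and λ ∈ ℝ^q with λ_i > 0 for all i, such that every f_i, i = 1,…,q, is bounded from below on K_x̄ and SOL((K_x̄)_∞, (Σ_{i=1}^q λ_i f_i)^∞) is bounded; (iii) there exist x̄ ∈ K and a nonempty I ⊆ {1,…,q} such that every f_i with i ∈ I is bounded from below on K_x̄ and SOL^w((K_x̄)_∞, f^∞) is bounded; (iv) there exists x̄ ∈ K such that every f_i, i = 1,…,q, is bounded from below on K_x̄ and SOL^s((K_x̄)_∞, f^∞) is bounded. -/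
open Filter Topology MvPolynomial Bornology

noncomputable section

/-!
A polynomial `p` that is bounded on a set `C` has its recession polynomial `p^∞` constant on the
asymptotic cone `C_∞`: if `deg p ≥ 1`, then `p(x_k) / t_k ^ deg p → p^∞(v)` while `p(x_k)` stays
bounded, so `p^∞` vanishes there. On `K_x̄` every `fᵢ` is bounded above by `fᵢ(x̄)`, so each
hypothesis makes some such `p^∞` (`Σ λᵢ fᵢ`, or a bounded-below `fᵢ`) constant on `(K_x̄)_∞`, and
the whole cone lies in the solution set assumed bounded. A bounded asymptotic cone forces `K_x̄` to
be bounded (an unbounded set has a unit asymptotic direction, whose positive multiples stay in the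
cone), so `K_x̄` is compact and a minimiser of `Σ fᵢ` on it is Pareto efficient on `K`.
-/

namespace MvPolynomial

theorem IsHomogeneous.eval_smul_s16 {σ R : Type*} [CommRing R] {φ : MvPolynomial σ R} {m : ℕ}
    (hφ : φ.IsHomogeneous m) (c : R) (x : σ → R) : eval (c • x) φ = c ^ m * eval x φ := by
  rw [eval_eq, eval_eq, Finset.mul_sum]
  refine Finset.sum_congr rfl fun d hd => ?_
  simp only [Pi.smul_apply, smul_eq_mul, mul_pow, Finset.prod_mul_distrib,
    Finset.prod_pow_eq_pow_sum, ← hφ.degree_eq_sum_deg_support hd]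
  ring

theorem eval_smul_eq_sum_homogeneousComponent {σ R : Type*} [CommRing R] (p : MvPolynomial σ R)
    (c : R) (x : σ → R) :
    eval (c • x) p =
      ∑ m ∈ Finset.range (p.totalDegree + 1), c ^ m * eval x (homogeneousComponent m p) := by
  conv_lhs => rw [← sum_homogeneousComponent p]
  rw [map_sum]
  exact Finset.sum_congr rfl fun m _ => (homogeneousComponent_isHomogeneous m p).eval_smul_s16 c x

end MvPolynomial

variable {n q : ℕ}

theorem tendsto_eval_div_pow_recPoly (p : MvPolynomial (Fin n) ℝ) {t : ℕ → ℝ}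
    {x : ℕ → Fin n → ℝ} {v : Fin n → ℝ} (ht : Tendsto t atTop atTop)
    (hx : Tendsto (fun k => (t k)⁻¹ • x k) atTop (𝓝 v)) :
    Tendsto (fun k => eval (x k) p / t k ^ p.totalDegree) atTop (𝓝 (recPoly p v)) := by
  set d := p.totalDegree
  -- `p (s⁻¹ • y) * s ^ d`, extended continuously to `s = 0`
  let F : ℝ × (Fin n → ℝ) → ℝ := fun sy =>
    ∑ m ∈ Finset.range (d + 1), sy.1 ^ (d - m) * eval sy.2 (homogeneousComponent m p)
  have hF : Continuous F := by
    refine continuous_finsetSum _ fun m _ => ?_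
    exact (continuous_fst.pow _).mul ((continuous_eval _).comp continuous_snd)
  have hF0 : F (0, v) = recPoly p v := by
    simp only [F]
    rw [Finset.sum_eq_single_of_mem d (Finset.self_mem_range_succ d)]
    · simp [recPoly, d]
    · intro m hm hmd
      have : m < d := by grind
      simp [zero_pow (Nat.sub_ne_zero_of_lt this)]
  have hlim : Tendsto (fun k => ((t k)⁻¹, (t k)⁻¹ • x k)) atTop (𝓝 (0, v)) :=
    (tendsto_inv_atTop_zero.comp ht).prodMk_nhds hx
  refine (hF0 ▸ hF.continuousAt.tendsto.comp hlim).congr' ?_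
  filter_upwards [ht.eventually_gt_atTop 0] with k hk
  have hx_eq : x k = t k • (t k)⁻¹ • x k := (smul_inv_smul₀ hk.ne' _).symm
  conv_rhs => rw [hx_eq, eval_smul_eq_sum_homogeneousComponent, Finset.sum_div]
  refine Finset.sum_congr rfl fun m hm => ?_
  have hmd : m ≤ d := Nat.lt_succ_iff.mp (Finset.mem_range.mp hm)
  dsimp only
  rw [inv_pow, pow_sub₀ _ hk.ne' hmd]
  field_simp

theorem recPoly_eq_zero_of_mem_asymCone {p : MvPolynomial (Fin n) ℝ} (hd : p.totalDegree ≠ 0)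
    {C : Set (Fin n → ℝ)} (hb : IsBounded ((fun x => eval x p) '' C)) {v : Fin n → ℝ}
    (hv : v ∈ asymCone C) : recPoly p v = 0 := by
  obtain ⟨t, x, ht, hxC, hx⟩ := hv
  obtain ⟨M, hM⟩ := hb.exists_norm_le
  refine tendsto_nhds_unique (tendsto_eval_div_pow_recPoly p ht hx) (squeeze_zero_norm' ?_
    ((tendsto_const_nhds (x := M)).div_atTop ((tendsto_pow_atTop hd).comp ht)))
  filter_upwards [ht.eventually_gt_atTop 0] with k hk
  rw [norm_div, norm_pow, Real.norm_of_nonneg hk.le]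
  exact div_le_div_of_nonneg_right (hM _ (Set.mem_image_of_mem _ (hxC k))) (by positivity)

theorem recPoly_eq_of_mem_asymCone {p : MvPolynomial (Fin n) ℝ} {C : Set (Fin n → ℝ)}
    (hb : IsBounded ((fun x => eval x p) '' C)) {v w : Fin n → ℝ} (hv : v ∈ asymCone C)
    (hw : w ∈ asymCone C) : recPoly p v = recPoly p w := by
  by_cases hd : p.totalDegree = 0
  · simp [recPoly, hd, homogeneousComponent_zero]
  · rw [recPoly_eq_zero_of_mem_asymCone hd hb hv, recPoly_eq_zero_of_mem_asymCone hd hb hw]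

theorem smul_mem_asymCone {A : Set (Fin n → ℝ)} {v : Fin n → ℝ} (hv : v ∈ asymCone A) {c : ℝ}
    (hc : 0 < c) : c • v ∈ asymCone A := by
  obtain ⟨t, x, ht, hx, hlim⟩ := hv
  refine ⟨fun k => t k / c, x, ht.atTop_div_const hc, hx, ?_⟩
  simpa only [div_eq_mul_inv, mul_inv, inv_inv, mul_comm _ c, ← smul_smul] using hlim.const_smul c

theorem exists_norm_eq_one_mem_asymCone {A : Set (Fin n → ℝ)} (hA : ¬ IsBounded A) :
    ∃ v, ‖v‖ = 1 ∧ v ∈ asymCone A := by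
  have hfar (k : ℕ) : ∃ x ∈ A, (k : ℝ) < ‖x‖ := by
    by_contra! h
    exact hA (isBounded_iff_forall_norm_le.2 ⟨k, h⟩)
  choose x hxA hxk using hfar
  have hpos (k : ℕ) : 0 < ‖x k‖ := (Nat.cast_nonneg k).trans_lt (hxk k)
  have hsphere (k : ℕ) : ‖x k‖⁻¹ • x k ∈ Metric.sphere (0 : Fin n → ℝ) 1 := by
    simp [norm_smul, (hpos k).ne']
  obtain ⟨v, hv, φ, hφ, hlim⟩ := (isCompact_sphere (0 : Fin n → ℝ) 1).tendsto_subseq hsphere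
  refine ⟨v, mem_sphere_zero_iff_norm.mp hv, fun k => ‖x (φ k)‖, fun k => x (φ k), ?_,
    fun k => hxA _, hlim⟩
  exact tendsto_atTop_mono (fun k => (hxk (φ k)).le)
    (tendsto_natCast_atTop_atTop.comp hφ.tendsto_atTop)

theorem isBounded_of_isBounded_asymCone {A : Set (Fin n → ℝ)} (h : IsBounded (asymCone A)) :
    IsBounded A := by
  by_contra hA
  obtain ⟨v, hv1, hv⟩ := exists_norm_eq_one_mem_asymCone hA
  obtain ⟨R, hR⟩ := h.exists_norm_le
  have hc : 0 < |R| + 1 := by positivity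
  have := hR _ (smul_mem_asymCone hv hc)
  rw [norm_smul, hv1, mul_one, Real.norm_of_nonneg hc.le] at this
  linarith [le_abs_self R]

theorem subset_SOLmin_of_forall_eq {C : Set (Fin n → ℝ)} {p : (Fin n → ℝ) → ℝ}
    (h : ∀ x ∈ C, ∀ y ∈ C, p x = p y) : C ⊆ SOLmin C p :=
  fun x hx => ⟨hx, fun y hy => (h x hx y hy).le⟩

theorem subset_SOLw_of_forall_eq {C : Set (Fin n → ℝ)} {g : Fin q → (Fin n → ℝ) → ℝ} (i : Fin q)
    (h : ∀ x ∈ C, ∀ y ∈ C, g i x = g i y) : C ⊆ SOLw C g :=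
  fun x hx => ⟨hx, fun ⟨y, hy, hlt⟩ => (hlt i).ne (h y hy x hx)⟩

theorem subset_SOLs_of_forall_eq {C : Set (Fin n → ℝ)} {g : Fin q → (Fin n → ℝ) → ℝ}
    (h : ∀ i, ∀ x ∈ C, ∀ y ∈ C, g i x = g i y) : C ⊆ SOLs C g :=
  fun x hx => ⟨hx, fun ⟨y, hy, _, i, hne⟩ => hne (h i y hy x hx)⟩

theorem isBounded_image_sum_mul {X ι : Type*} [Fintype ι] {C : Set X} {g : ι → X → ℝ}
    {lam : ι → ℝ} (I : Finset ι) (hzero : ∀ i ∉ I, lam i = 0)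
    (hb : ∀ i ∈ I, IsBounded (g i '' C)) : IsBounded ((fun x => ∑ i, lam i * g i x) '' C) := by
  choose! M hM using fun i hi => (hb i hi).exists_norm_le
  refine isBounded_iff_forall_norm_le.2 ⟨∑ i ∈ I, |lam i| * M i, ?_⟩
  rintro _ ⟨x, hx, rfl⟩
  dsimp only
  rw [← Finset.sum_subset (Finset.subset_univ I) fun i _ hi => by simp [hzero i hi]]
  refine (norm_sum_le _ _).trans (Finset.sum_le_sum fun i hi => ?_)
  rw [norm_mul, Real.norm_eq_abs]
  exact mul_le_mul_of_nonneg_left (hM i hi _ (Set.mem_image_of_mem _ hx)) (abs_nonneg _)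

def sublevel (K : Set (Fin n → ℝ)) (g : Fin q → (Fin n → ℝ) → ℝ) (xbar : Fin n → ℝ) :
    Set (Fin n → ℝ) :=
  {x ∈ K | ∀ j, g j x ≤ g j xbar}

theorem isBounded_image_sublevel {K : Set (Fin n → ℝ)} {g : Fin q → (Fin n → ℝ) → ℝ}
    {xbar : Fin n → ℝ} (i : Fin q) (h : ∃ m : ℝ, ∀ x ∈ sublevel K g xbar, m ≤ g i x) :
    IsBounded (g i '' sublevel K g xbar) := by
  obtain ⟨m, hm⟩ := h
  exact isBounded_iff_bddBelow_bddAbove.2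
    ⟨⟨m, Set.forall_mem_image.2 hm⟩, ⟨g i xbar, Set.forall_mem_image.2 fun x hx => hx.2 i⟩⟩

theorem SOLs_nonempty_of_isBounded_sublevel {K : Set (Fin n → ℝ)} (hK : IsClosed K)
    {g : Fin q → (Fin n → ℝ) → ℝ} (hg : ∀ i, Continuous (g i)) {xbar : Fin n → ℝ}
    (hxbar : xbar ∈ K) (hb : IsBounded (sublevel K g xbar)) : (SOLs K g).Nonempty := by
  have hclosed : IsClosed (sublevel K g xbar) := by
    have : sublevel K g xbar = K ∩ ⋂ j, {x | g j x ≤ g j xbar} := by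
      ext; simp [sublevel]
    exact this ▸ hK.inter (isClosed_iInter fun j => isClosed_le (hg j) continuous_const)
  obtain ⟨x, hx, hmin⟩ := (Metric.isCompact_of_isClosed_isBounded hclosed hb).exists_isMinOn
    ⟨xbar, hxbar, fun j => le_rfl⟩ (continuous_finsetSum _ fun i _ => hg i).continuousOn
  refine ⟨x, hx.1, fun ⟨y, hyK, hle, i, hne⟩ => ?_⟩
  have hy : y ∈ sublevel K g xbar := ⟨hyK, fun j => (hle j).trans (hx.2 j)⟩
  have hlt : ∑ j, g j y < ∑ j, g j x :=
    Finset.sum_lt_sum (fun j _ => hle j) ⟨i, Finset.mem_univ _, (hle i).lt_of_ne hne⟩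
  exact not_lt_of_ge (hmin hy) hlt

theorem SOLs_nonempty_of_isBounded_SOLmin {K : Set (Fin n → ℝ)} (hK : IsClosed K)
    (f : Fin q → MvPolynomial (Fin n) ℝ) {xbar : Fin n → ℝ} (hxbar : xbar ∈ K)
    (I : Finset (Fin q)) {lam : Fin q → ℝ} (hzero : ∀ i ∉ I, lam i = 0)
    (hlo : ∀ i ∈ I, ∃ m : ℝ, ∀ x ∈ sublevel K (fun j x => eval x (f j)) xbar, m ≤ eval x (f i))
    (hsol : IsBounded (SOLmin (asymCone (sublevel K (fun j x => eval x (f j)) xbar))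
      (recPoly (∑ i, C (lam i) * f i)))) :
    (SOLs K (fun i x => eval x (f i))).Nonempty := by
  have hb : IsBounded ((fun x => eval x (∑ i, C (lam i) * f i)) ''
      sublevel K (fun j x => eval x (f j)) xbar) := by
    convert isBounded_image_sum_mul I hzero fun i hi => isBounded_image_sublevel i (hlo i hi)
      using 3
    simp [map_sum]
  refine SOLs_nonempty_of_isBounded_sublevel hK (fun i => continuous_eval _) hxbar
    (isBounded_of_isBounded_asymCone (hsol.subset (subset_SOLmin_of_forall_eq ?_)))
  exact fun v hv w hw => recPoly_eq_of_mem_asymCone hb hv hw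

theorem stmt16_general {n q : ℕ} (K : Set (Fin n → ℝ)) (hKcl : IsClosed K)
    (f : Fin q → MvPolynomial (Fin n) ℝ) :
    ((∃ xbar ∈ K, ∃ I : Finset (Fin q), I.Nonempty ∧ ∃ lam : Fin q → ℝ,
        (∀ i ∈ I, 0 < lam i) ∧ (∀ i ∉ I, lam i = 0) ∧
        (∀ i ∈ I, ∃ m : ℝ, ∀ x ∈ {x ∈ K | ∀ j, eval x (f j) ≤ eval xbar (f j)},
          m ≤ eval x (f i)) ∧
        Bornology.IsBounded
          (SOLmin (asymCone {x ∈ K | ∀ j, eval x (f j) ≤ eval xbar (f j)})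
            (recPoly (∑ i, MvPolynomial.C (lam i) * f i)))) →
      (SOLs K (fun i x => eval x (f i))).Nonempty) ∧
    ((∃ xbar ∈ K, ∃ lam : Fin q → ℝ, (∀ i, 0 < lam i) ∧
        (∀ i, ∃ m : ℝ, ∀ x ∈ {x ∈ K | ∀ j, eval x (f j) ≤ eval xbar (f j)},
          m ≤ eval x (f i)) ∧
        Bornology.IsBounded
          (SOLmin (asymCone {x ∈ K | ∀ j, eval x (f j) ≤ eval xbar (f j)})
            (recPoly (∑ i, MvPolynomial.C (lam i) * f i)))) →
      (SOLs K (fun i x => eval x (f i))).Nonempty) ∧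
    ((∃ xbar ∈ K, ∃ I : Finset (Fin q), I.Nonempty ∧
        (∀ i ∈ I, ∃ m : ℝ, ∀ x ∈ {x ∈ K | ∀ j, eval x (f j) ≤ eval xbar (f j)},
          m ≤ eval x (f i)) ∧
        Bornology.IsBounded
          (SOLw (asymCone {x ∈ K | ∀ j, eval x (f j) ≤ eval xbar (f j)})
            (fun i => recPoly (f i)))) →
      (SOLs K (fun i x => eval x (f i))).Nonempty) ∧
    ((∃ xbar ∈ K,
        (∀ i, ∃ m : ℝ, ∀ x ∈ {x ∈ K | ∀ j, eval x (f j) ≤ eval xbar (f j)},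
          m ≤ eval x (f i)) ∧
        Bornology.IsBounded
          (SOLs (asymCone {x ∈ K | ∀ j, eval x (f j) ≤ eval xbar (f j)})
            (fun i => recPoly (f i)))) →
      (SOLs K (fun i x => eval x (f i))).Nonempty) := by
  have hcont (i : Fin q) : Continuous fun x => eval x (f i) := continuous_eval _
  refine ⟨?_, ?_, ?_, ?_⟩
  · rintro ⟨xbar, hxbar, I, -, lam, -, hzero, hlo, hsol⟩
    exact SOLs_nonempty_of_isBounded_SOLmin hKcl f hxbar I hzero hlo hsol
  · rintro ⟨xbar, hxbar, lam, -, hlo, hsol⟩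
    exact SOLs_nonempty_of_isBounded_SOLmin hKcl f hxbar Finset.univ
      (fun i hi => absurd (Finset.mem_univ i) hi) (fun i _ => hlo i) hsol
  · rintro ⟨xbar, hxbar, I, ⟨i, hi⟩, hlo, hsol⟩
    refine SOLs_nonempty_of_isBounded_sublevel hKcl hcont hxbar
      (isBounded_of_isBounded_asymCone (hsol.subset (subset_SOLw_of_forall_eq i ?_)))
    exact fun v hv w hw =>
      recPoly_eq_of_mem_asymCone (isBounded_image_sublevel i (hlo i hi)) hv hw
  · rintro ⟨xbar, hxbar, hlo, hsol⟩
    refine SOLs_nonempty_of_isBounded_sublevel hKcl hcont hxbar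
      (isBounded_of_isBounded_asymCone (hsol.subset (subset_SOLs_of_forall_eq ?_)))
    exact fun i v hv w hw =>
      recPoly_eq_of_mem_asymCone (isBounded_image_sublevel i (hlo i)) hv hw

theorem stmt16 {n q : ℕ} (K : Set (Fin n → ℝ)) (hKne : K.Nonempty) (hKcl : IsClosed K)
    (f : Fin q → MvPolynomial (Fin n) ℝ) (hdeg : ∀ i, 1 ≤ (f i).totalDegree) :
    ((∃ xbar ∈ K, ∃ I : Finset (Fin q), I.Nonempty ∧ ∃ lam : Fin q → ℝ,
        (∀ i ∈ I, 0 < lam i) ∧ (∀ i ∉ I, lam i = 0) ∧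
        (∀ i ∈ I, ∃ m : ℝ, ∀ x ∈ {x ∈ K | ∀ j, eval x (f j) ≤ eval xbar (f j)},
          m ≤ eval x (f i)) ∧
        Bornology.IsBounded
          (SOLmin (asymCone {x ∈ K | ∀ j, eval x (f j) ≤ eval xbar (f j)})
            (recPoly (∑ i, MvPolynomial.C (lam i) * f i)))) →
      (SOLs K (fun i x => eval x (f i))).Nonempty) ∧
    ((∃ xbar ∈ K, ∃ lam : Fin q → ℝ, (∀ i, 0 < lam i) ∧
        (∀ i, ∃ m : ℝ, ∀ x ∈ {x ∈ K | ∀ j, eval x (f j) ≤ eval xbar (f j)},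
          m ≤ eval x (f i)) ∧
        Bornology.IsBounded
          (SOLmin (asymCone {x ∈ K | ∀ j, eval x (f j) ≤ eval xbar (f j)})
            (recPoly (∑ i, MvPolynomial.C (lam i) * f i)))) →
      (SOLs K (fun i x => eval x (f i))).Nonempty) ∧
    ((∃ xbar ∈ K, ∃ I : Finset (Fin q), I.Nonempty ∧
        (∀ i ∈ I, ∃ m : ℝ, ∀ x ∈ {x ∈ K | ∀ j, eval x (f j) ≤ eval xbar (f j)},
          m ≤ eval x (f i)) ∧
        Bornology.IsBounded
          (SOLw (asymCone {x ∈ K | ∀ j, eval x (f j) ≤ eval xbar (f j)})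
            (fun i => recPoly (f i)))) →
      (SOLs K (fun i x => eval x (f i))).Nonempty) ∧
    ((∃ xbar ∈ K,
        (∀ i, ∃ m : ℝ, ∀ x ∈ {x ∈ K | ∀ j, eval x (f j) ≤ eval xbar (f j)},
          m ≤ eval x (f i)) ∧
        Bornology.IsBounded
          (SOLs (asymCone {x ∈ K | ∀ j, eval x (f j) ≤ eval xbar (f j)})
            (fun i => recPoly (f i)))) →
      (SOLs K (fun i x => eval x (f i))).Nonempty) :=
  stmt16_general K hKcl f
end
end
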